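/- arXiv:1002.2488 — 6 statements merged into one kernel-verified Lean document; each statement's English description precedes it below -/
import Mathlib

section
/- Let G be a simple graph on a finite vertex set X, let m ≥ 1, and suppose there exist a complex inner product space H, a unit vector w ∈ H, and vectors w_x^i ∈ H for x ∈ X and i ∈ {1,…,m} satisfying: (1) ∑_{x∈X} w_x^i = w for every i; (2) ⟨w_x^i, w_{x'}^i⟩ = 0 for every i and all x ≠ x'; (3) ⟨w_x^i, w_{x'}^j⟩ = 0 for every edge {x,x'} of G and all i,j; (4) ⟨w_x^i, w_x^j⟩ = 0 for every x and all i ≠ j. Then the matrix B indexed by X × X with entries B_{x,x'} = (1/m)·⟨∑_{i=1}^m w_x^i, ∑_{i=1}^m w_{x'}^i⟩ is Hermitian positive semidefinite, satisfies B_{x,x'} = 0 whenever x and x' are adjacent in G, trace(B) = 1, and trace(B·J) = m, where J is the all-ones matrix. (In particular β(G) ≤ ϑ(G).) -/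
open Matrix
open scoped BigOperators ComplexOrder InnerProductSpace

/-! `B` is `1/m` times the Gram matrix of the vectors `u_x = ∑ i, w_x^i`, hence positive
semidefinite, and (3) kills its entries on edges. By (4), `‖u_x‖² = ∑ i, ‖w_x^i‖²`, while (2) and
(1) give `∑ x, ‖w_x^i‖² = ‖w‖² = 1` for each `i`, so `trace B = m / m = 1`. Finally `trace (B J)` is
the sum of all entries of `B`, that is `‖∑ x, u_x‖² / m = ‖m w‖² / m = m` by (1). -/

section
variable {ι 𝕜 E : Type*} [Fintype ι] [RCLike 𝕜] [SeminormedAddCommGroup E] [InnerProductSpace 𝕜 E]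

lemma inner_sum_self_of_pairwise_inner_eq_zero {v : ι → E}
    (h : Pairwise fun i j => ⟪v i, v j⟫_𝕜 = 0) :
    ⟪∑ i, v i, ∑ i, v i⟫_𝕜 = ∑ i, ⟪v i, v i⟫_𝕜 := by
  simp only [sum_inner, inner_sum]
  exact Finset.sum_congr rfl fun i _ =>
    Finset.sum_eq_single i (fun _ _ hji => h hji) (by simp)

lemma Matrix.trace_gram (v : ι → E) : (gram 𝕜 v).trace = ∑ i, ⟪v i, v i⟫_𝕜 := rfl

lemma Matrix.trace_gram_mul_ones (v : ι → E) :
    (gram 𝕜 v * of fun _ _ => 1).trace = ⟪∑ i, v i, ∑ i, v i⟫_𝕜 := by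
  rw [sum_inner]
  simp only [trace, diag, mul_apply, of_apply, mul_one, gram_apply, inner_sum]

end

theorem theta_bound_of_beta_vectors_general
    {X : Type} [Fintype X] (G : SimpleGraph X)
    (m : ℕ) (hm : 1 ≤ m)
    {H : Type} [NormedAddCommGroup H] [InnerProductSpace ℂ H]
    (w : H) (hw : ‖w‖ = 1) (wv : X → Fin m → H)
    -- (1)
    (h1 : ∀ i, ∑ x, wv x i = w)
    -- (2)
    (h2 : ∀ i x x', x ≠ x' → ⟪wv x i, wv x' i⟫_ℂ = 0)
    -- (3)
    (h3 : ∀ x x', G.Adj x x' → ∀ i j, ⟪wv x i, wv x' j⟫_ℂ = 0)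
    -- (4)
    (h4 : ∀ x i j, i ≠ j → ⟪wv x i, wv x j⟫_ℂ = 0)
    (B : Matrix X X ℂ)
    (hB : B = Matrix.of (fun x x' => (m : ℂ)⁻¹ * ⟪∑ i, wv x i, ∑ i, wv x' i⟫_ℂ)) :
    B.PosSemidef ∧ (∀ x x', G.Adj x x' → B x x' = 0) ∧
      B.trace = 1 ∧ (B * Matrix.of (fun _ _ => (1 : ℂ))).trace = (m : ℂ) := by
  set u : X → H := fun x => ∑ i, wv x i
  replace hB : B = (m : ℂ)⁻¹ • gram ℂ u := by rw [hB]; rfl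
  subst hB
  have hm0 : (m : ℂ) ≠ 0 := Nat.cast_ne_zero.mpr (by omega)
  have hw_inner : ⟪w, w⟫_ℂ = 1 := by simp [inner_self_eq_norm_sq_to_K, hw]
  have hdiag (x : X) : ⟪u x, u x⟫_ℂ = ∑ i, ⟪wv x i, wv x i⟫_ℂ :=
    inner_sum_self_of_pairwise_inner_eq_zero fun i j => h4 x i j
  have hcol (i : Fin m) : ∑ x, ⟪wv x i, wv x i⟫_ℂ = 1 := by
    rw [← inner_sum_self_of_pairwise_inner_eq_zero fun x x' => h2 i x x', h1, hw_inner]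
  have hsum : ∑ x, u x = (m : ℂ) • w := by
    rw [Finset.sum_comm]
    simp [h1, ← Nat.cast_smul_eq_nsmul ℂ]
  refine ⟨(posSemidef_gram ℂ u).smul (by positivity), fun x x' hxx' => ?_, ?_, ?_⟩
  · simp [u, h3 x x' hxx']
  · rw [trace_smul, trace_gram, Finset.sum_congr rfl fun x _ => hdiag x, Finset.sum_comm,
      Finset.sum_congr rfl fun i _ => hcol i]
    simp [hm0]
  · rw [smul_mul, trace_smul, trace_gram_mul_ones, hsum, inner_smul_left, inner_smul_right,
      hw_inner]
    simp [hm0]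

/-- Given vectors `w_x^i` in a complex inner product space satisfying conditions
(1)-(4) for a graph `G` and `m ≥ 1` messages, the matrix
`B x x' = (1/m) ⟪∑ i, w_x^i, ∑ i, w_{x'}^i⟫` is a feasible solution for the Lovász
theta function with `trace (B * J) = m`; in particular `β(G) ≤ ϑ(G)`. -/
theorem theta_bound_of_beta_vectors
    {X : Type} [Fintype X] [DecidableEq X] (G : SimpleGraph X)
    (m : ℕ) (hm : 1 ≤ m)
    {H : Type} [NormedAddCommGroup H] [InnerProductSpace ℂ H]
    (w : H) (hw : ‖w‖ = 1) (wv : X → Fin m → H)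
    -- (1)
    (h1 : ∀ i, ∑ x, wv x i = w)
    -- (2)
    (h2 : ∀ i x x', x ≠ x' → ⟪wv x i, wv x' i⟫_ℂ = 0)
    -- (3)
    (h3 : ∀ x x', G.Adj x x' → ∀ i j, ⟪wv x i, wv x' j⟫_ℂ = 0)
    -- (4)
    (h4 : ∀ x i j, i ≠ j → ⟪wv x i, wv x j⟫_ℂ = 0)
    (B : Matrix X X ℂ)
    (hB : B = Matrix.of (fun x x' => (m : ℂ)⁻¹ * ⟪∑ i, wv x i, ∑ i, wv x' i⟫_ℂ)) :
    B.PosSemidef ∧ (∀ x x', G.Adj x x' → B x x' = 0) ∧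
      B.trace = 1 ∧ (B * Matrix.of (fun _ _ => (1 : ℂ))).trace = (m : ℂ) :=
  theta_bound_of_beta_vectors_general G m hm w hw wv h1 h2 h3 h4 B hB
end

section
/- Let G be a simple graph on a finite vertex set X and suppose there exists an entanglement-assisted zero-error protocol with m ≥ 1 messages for G. Then there exist a complex inner product space H, a unit vector w ∈ H, and vectors w_x^i ∈ H for x ∈ X and i ∈ {1,…,m} satisfying: (1) ∑_{x∈X} w_x^i = w for every i; (2) ⟨w_x^i, w_{x'}^i⟩ = 0 for every i and all x ≠ x'; (3) ⟨w_x^i, w_{x'}^j⟩ = 0 for every edge {x,x'} of G and all i,j; (4) ⟨w_x^i, w_x^j⟩ = 0 for every x and all i ≠ j. (In particular α*(G) ≤ β(G).) -/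
/-!
Take `w = ψ` and `w_x^i = (P_x^i ⊗ I) ψ`; (1) and (2) are inherited from Alice's projective
measurements. For (3) and (4) one needs `⟨(A ⊗ I) ψ, (B ⊗ I) ψ⟩ = 0` whenever Bob has a POVM
`{R_k}` that never outputs `j` on `A` and outputs only `j` on `B`. Zero expectation of a positive
operator kills the vector, so `(A ⊗ R_j) ψ = 0` and `(B ⊗ I) ψ = (B ⊗ R_j) ψ`; since `R_j` acts
on Bob's side it can be moved across the inner product onto `A ⊗ I`.
-/

open Matrix Kronecker
open scoped BigOperators ComplexOrder InnerProductSpace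

namespace Matrix

section Semiring

variable {α ι l m n p : Type*} [NonUnitalNonAssocSemiring α]

theorem sum_kronecker (s : Finset ι) (A : ι → Matrix l m α) (B : Matrix n p α) :
    (∑ i ∈ s, A i) ⊗ₖ B = ∑ i ∈ s, A i ⊗ₖ B := by
  ext
  simp only [kroneckerMap_apply, sum_apply, Finset.sum_mul]

theorem kronecker_sum (s : Finset ι) (A : Matrix l m α) (B : ι → Matrix n p α) :
    A ⊗ₖ (∑ i ∈ s, B i) = ∑ i ∈ s, A ⊗ₖ B i := by
  ext
  simp only [kroneckerMap_apply, sum_apply, Finset.mul_sum]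

end Semiring

section Vectors

variable {α ι l m n : Type*} [Fintype l] [Fintype m] [Fintype n]

theorem star_mulVec_dotProduct_mulVec [CommSemiring α] [StarRing α] (M N : Matrix m n α)
    (v : n → α) : star (M *ᵥ v) ⬝ᵥ (N *ᵥ v) = star v ⬝ᵥ ((Mᴴ * N) *ᵥ v) := by
  rw [star_mulVec, ← dotProduct_mulVec, mulVec_mulVec]

theorem kronecker_one_mulVec_eq_kronecker_mulVec [Fintype ι] [Semiring α] [DecidableEq n]
    (B : Matrix l l α) {R : ι → Matrix n n α} (hR : ∑ k, R k = 1) {v : l × n → α} (j : ι)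
    (hB : ∀ k, k ≠ j → (B ⊗ₖ R k) *ᵥ v = 0) : (B ⊗ₖ 1) *ᵥ v = (B ⊗ₖ R j) *ᵥ v := by
  rw [← hR, kronecker_sum, sum_mulVec]
  exact Finset.sum_eq_single j (fun k _ hk => hB k hk) (by simp)

theorem sum_kronecker_one_mulVec [Fintype ι] [Semiring α] [DecidableEq l] [DecidableEq n]
    {A : ι → Matrix l l α} (hA : ∑ x, A x = 1) (v : l × n → α) :
    ∑ x, (A x ⊗ₖ (1 : Matrix n n α)) *ᵥ v = v := by
  rw [← sum_mulVec, ← sum_kronecker, hA, one_kronecker_one, one_mulVec]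

theorem star_kronecker_one_mulVec_dotProduct_eq_zero [CommSemiring α] [StarRing α]
    [DecidableEq n] {A B : Matrix l l α} (hAB : Aᴴ * B = 0) (v : l × n → α) :
    star ((A ⊗ₖ (1 : Matrix n n α)) *ᵥ v) ⬝ᵥ ((B ⊗ₖ 1) *ᵥ v) = 0 := by
  rw [star_mulVec_dotProduct_mulVec, conjTranspose_kronecker, conjTranspose_one,
    ← mul_kronecker_mul, hAB, zero_kronecker, zero_mulVec, dotProduct_zero]

end Vectors

section PosSemidef

variable {𝕜 ι l n : Type*} [RCLike 𝕜] [Fintype ι] [Fintype l] [Fintype n]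

theorem IsHermitian.posSemidef_of_mul_self_eq {P : Matrix n n 𝕜} (hP : P.IsHermitian)
    (hPP : P * P = P) : P.PosSemidef := by
  simpa only [hP.eq, hPP] using posSemidef_conjTranspose_mul_self P

theorem star_kronecker_one_mulVec_dotProduct_eq_zero_of_povm [DecidableEq n] {A B : Matrix l l 𝕜}
    (hA : A.PosSemidef) (hB : B.PosSemidef) {R : ι → Matrix n n 𝕜} (hR : ∀ k, (R k).PosSemidef)
    (hRsum : ∑ k, R k = 1) {v : l × n → 𝕜} (j : ι)
    (hAj : star v ⬝ᵥ ((A ⊗ₖ R j) *ᵥ v) = 0)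
    (hBk : ∀ k, k ≠ j → star v ⬝ᵥ ((B ⊗ₖ R k) *ᵥ v) = 0) :
    star ((A ⊗ₖ (1 : Matrix n n 𝕜)) *ᵥ v) ⬝ᵥ ((B ⊗ₖ 1) *ᵥ v) = 0 := by
  have hAv : (A ⊗ₖ R j) *ᵥ v = 0 := ((hA.kronecker (hR j)).dotProduct_mulVec_zero_iff v).mp hAj
  have hBv : (B ⊗ₖ 1) *ᵥ v = (B ⊗ₖ R j) *ᵥ v :=
    kronecker_one_mulVec_eq_kronecker_mulVec B hRsum j fun k hk =>
      ((hB.kronecker (hR k)).dotProduct_mulVec_zero_iff v).mp (hBk k hk)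
  have hswap : (A ⊗ₖ (1 : Matrix n n 𝕜))ᴴ * (B ⊗ₖ R j) = (A ⊗ₖ R j)ᴴ * (B ⊗ₖ 1) := by
    rw [conjTranspose_kronecker, conjTranspose_kronecker, conjTranspose_one, (hR j).1.eq,
      ← mul_kronecker_mul, ← mul_kronecker_mul, one_mul, mul_one]
  rw [hBv, star_mulVec_dotProduct_mulVec, hswap, ← star_mulVec_dotProduct_mulVec, hAv,
    star_zero, zero_dotProduct]

end PosSemidef

end Matrix

theorem EuclideanSpace.norm_toLp_eq_one {𝕜 ι : Type*} [RCLike 𝕜] [Fintype ι] {v : ι → 𝕜}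
    (hv : star v ⬝ᵥ v = 1) : ‖WithLp.toLp 2 v‖ = 1 := by
  have h : ((‖WithLp.toLp 2 v‖ : ℝ) : 𝕜) ^ 2 = 1 := by
    rw [← inner_self_eq_norm_sq_to_K, EuclideanSpace.inner_toLp_toLp, dotProduct_comm, hv]
  exact (pow_eq_one_iff_of_nonneg (norm_nonneg _) two_ne_zero).mp (by exact_mod_cast h)

theorem beta_bound_of_protocol_general
    {X : Type} [Fintype X] (G : SimpleGraph X)
    (m d : ℕ)
    -- the shared bipartite state
    (ψ : Fin d × Fin d → ℂ) (hψ : star ψ ⬝ᵥ ψ = 1)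
    -- Alice's projective measurements, one for each message `i`
    (P : Fin m → X → Matrix (Fin d) (Fin d) ℂ)
    (hPherm : ∀ i x, (P i x).IsHermitian)
    (hPidem : ∀ i x, P i x * P i x = P i x)
    (hPorth : ∀ i x x', x ≠ x' → P i x * P i x' = 0)
    (hPsum : ∀ i, ∑ x, P i x = 1)
    -- Bob's POVMs, one for each edge `{x, x'}` of `G`
    (Q : X → X → Fin m → Matrix (Fin d) (Fin d) ℂ)
    (hQsymm : ∀ x x', G.Adj x x' → ∀ j, Q x x' j = Q x' x j)
    (hQpsd : ∀ x x', G.Adj x x' → ∀ j, (Q x x' j).PosSemidef)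
    (hQsum : ∀ x x', G.Adj x x' → ∑ j, Q x x' j = 1)
    -- Bob's POVMs for isolated vertices
    (Q0 : X → Fin m → Matrix (Fin d) (Fin d) ℂ)
    (hQ0psd : ∀ x, (∀ y, ¬ G.Adj x y) → ∀ j, (Q0 x j).PosSemidef)
    (hQ0sum : ∀ x, (∀ y, ¬ G.Adj x y) → ∑ j, Q0 x j = 1)
    -- zero-error (correct decoding) conditions
    (hzero : ∀ x x', G.Adj x x' → ∀ i j,
      star ψ ⬝ᵥ ((P i x ⊗ₖ Q x x' j) *ᵥ ψ) = if i = j then 1 else 0)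
    (hzero0 : ∀ x, (∀ y, ¬ G.Adj x y) → ∀ i j,
      star ψ ⬝ᵥ ((P i x ⊗ₖ Q0 x j) *ᵥ ψ) = if i = j then 1 else 0) :
    ∃ (H : Type) (_ : NormedAddCommGroup H) (_ : InnerProductSpace ℂ H)
      (w : H) (wv : X → Fin m → H),
      ‖w‖ = 1 ∧
      -- (1)
      (∀ i, ∑ x, wv x i = w) ∧
      -- (2)
      (∀ i x x', x ≠ x' → ⟪wv x i, wv x' i⟫_ℂ = 0) ∧
      -- (3)
      (∀ x x', G.Adj x x' → ∀ i j, ⟪wv x i, wv x' j⟫_ℂ = 0) ∧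
      -- (4)
      (∀ x i j, i ≠ j → ⟪wv x i, wv x j⟫_ℂ = 0) := by
  have hPpsd : ∀ i x, (P i x).PosSemidef := fun i x =>
    (hPherm i x).posSemidef_of_mul_self_eq (hPidem i x)
  have decoder : ∀ x, ∃ R : Fin m → Matrix (Fin d) (Fin d) ℂ, (∀ j, (R j).PosSemidef) ∧
      ∑ j, R j = 1 ∧ ∀ i j, star ψ ⬝ᵥ ((P i x ⊗ₖ R j) *ᵥ ψ) = if i = j then 1 else 0 := by
    intro x
    by_cases hx : ∃ y, G.Adj x y
    · obtain ⟨y, hy⟩ := hx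
      exact ⟨Q x y, hQpsd x y hy, hQsum x y hy, hzero x y hy⟩
    · push Not at hx
      exact ⟨Q0 x, hQ0psd x hx, hQ0sum x hx, hzero0 x hx⟩
  refine ⟨EuclideanSpace ℂ (Fin d × Fin d), inferInstance, inferInstance, WithLp.toLp 2 ψ,
    fun x i => WithLp.toLp 2 ((P i x ⊗ₖ 1) *ᵥ ψ), EuclideanSpace.norm_toLp_eq_one hψ,
    fun i => ?_, ?_, ?_, ?_⟩ <;>
    simp only [← WithLp.toLp_sum, EuclideanSpace.inner_toLp_toLp, dotProduct_comm _ (star _)]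
  · rw [sum_kronecker_one_mulVec (hPsum i)]
  · intro i x x' hxx'
    exact star_kronecker_one_mulVec_dotProduct_eq_zero
      (by rw [(hPherm i x).eq, hPorth i x x' hxx']) ψ
  · intro x x' hxx' i j
    obtain rfl | hij := eq_or_ne i j
    · exact star_kronecker_one_mulVec_dotProduct_eq_zero
        (by rw [(hPherm i x).eq, hPorth i x x' hxx'.ne]) ψ
    · refine star_kronecker_one_mulVec_dotProduct_eq_zero_of_povm (hPpsd i x) (hPpsd j x')
        (hQpsd x x' hxx') (hQsum x x' hxx') j (by rw [hzero x x' hxx', if_neg hij]) fun k hk => ?_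
      rw [hQsymm x x' hxx', hzero x' x hxx'.symm, if_neg hk.symm]
  · intro x i j hij
    obtain ⟨R, hR, hRsum, hdec⟩ := decoder x
    exact star_kronecker_one_mulVec_dotProduct_eq_zero_of_povm (hPpsd i x) (hPpsd j x) hR hRsum j
      (by rw [hdec, if_neg hij]) fun k hk => by rw [hdec, if_neg hk.symm]

/-- If a graph `G` admits an entanglement-assisted zero-error protocol with `m ≥ 1`
messages, then there exist a complex inner product space `H`, a unit vector `w`, and
vectors `w_x^i` satisfying conditions (1)-(4); in particular `α*(G) ≤ β(G)`. -/
theorem beta_bound_of_protocol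
    {X : Type} [Fintype X] [DecidableEq X] (G : SimpleGraph X)
    (m d : ℕ) (hm : 1 ≤ m) (hd : 1 ≤ d)
    -- the shared bipartite state
    (ψ : Fin d × Fin d → ℂ) (hψ : star ψ ⬝ᵥ ψ = 1)
    -- Alice's projective measurements, one for each message `i`
    (P : Fin m → X → Matrix (Fin d) (Fin d) ℂ)
    (hPherm : ∀ i x, (P i x).IsHermitian)
    (hPidem : ∀ i x, P i x * P i x = P i x)
    (hPorth : ∀ i x x', x ≠ x' → P i x * P i x' = 0)
    (hPsum : ∀ i, ∑ x, P i x = 1)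
    -- Bob's POVMs, one for each edge `{x, x'}` of `G`
    (Q : X → X → Fin m → Matrix (Fin d) (Fin d) ℂ)
    (hQsymm : ∀ x x', G.Adj x x' → ∀ j, Q x x' j = Q x' x j)
    (hQpsd : ∀ x x', G.Adj x x' → ∀ j, (Q x x' j).PosSemidef)
    (hQsum : ∀ x x', G.Adj x x' → ∑ j, Q x x' j = 1)
    -- Bob's POVMs for isolated vertices
    (Q0 : X → Fin m → Matrix (Fin d) (Fin d) ℂ)
    (hQ0psd : ∀ x, (∀ y, ¬ G.Adj x y) → ∀ j, (Q0 x j).PosSemidef)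
    (hQ0sum : ∀ x, (∀ y, ¬ G.Adj x y) → ∑ j, Q0 x j = 1)
    -- zero-error (correct decoding) conditions
    (hzero : ∀ x x', G.Adj x x' → ∀ i j,
      star ψ ⬝ᵥ ((P i x ⊗ₖ Q x x' j) *ᵥ ψ) = if i = j then 1 else 0)
    (hzero0 : ∀ x, (∀ y, ¬ G.Adj x y) → ∀ i j,
      star ψ ⬝ᵥ ((P i x ⊗ₖ Q0 x j) *ᵥ ψ) = if i = j then 1 else 0) :
    ∃ (H : Type) (_ : NormedAddCommGroup H) (_ : InnerProductSpace ℂ H)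
      (w : H) (wv : X → Fin m → H),
      ‖w‖ = 1 ∧
      -- (1)
      (∀ i, ∑ x, wv x i = w) ∧
      -- (2)
      (∀ i x x', x ≠ x' → ⟪wv x i, wv x' i⟫_ℂ = 0) ∧
      -- (3)
      (∀ x x', G.Adj x x' → ∀ i j, ⟪wv x i, wv x' j⟫_ℂ = 0) ∧
      -- (4)
      (∀ x i j, i ≠ j → ⟪wv x i, wv x j⟫_ℂ = 0) :=
  beta_bound_of_protocol_general G m d ψ hψ P hPherm hPidem hPorth hPsum Q hQsymm hQpsd hQsum Q0
    hQ0psd hQ0sum hzero hzero0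
end

section
/- Let d ≥ 1, let ψ ∈ ℂ^(Fin d × Fin d) be a vector and let S be the d×d complex matrix with S_{l,k} = √d · ψ_{(k,l)}. Let P and Q be positive semidefinite d×d complex matrices. If ⟨ψ, (P ⊗ Q) ψ⟩ = 0, then P · (Sᴴ · Q · S)ᵀ = 0. -/
open Matrix Kronecker
open scoped ComplexOrder

/-! `P ⊗ Q` is positive semidefinite, so its null vector `ψ` lies in its kernel. Reading `ψ` as the
matrix `X = Sᵀ / √d`, the vectorization identity `(P ⊗ Q) vec X = vec (Q X Pᵀ)` turns this into
`Q X Pᵀ = 0`, and `P (Xᴴ Q X)ᵀ = (Q X Pᵀ)ᵀ (Xᴴ)ᵀ`. -/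

namespace Matrix

variable {𝕜 m n : Type*} [RCLike 𝕜] [Fintype m] [Fintype n]

theorem mul_transpose_conjTranspose_mul_mul_eq_zero {P : Matrix n n 𝕜} {Q : Matrix m m 𝕜}
    {X : Matrix m n 𝕜} (hP : P.PosSemidef) (hQ : Q.PosSemidef)
    (h : star (vec X) ⬝ᵥ ((P ⊗ₖ Q) *ᵥ vec X) = 0) :
    P * (Xᴴ * Q * X)ᵀ = 0 := by
  have hker : (P ⊗ₖ Q) *ᵥ vec X = 0 := ((hP.kronecker hQ).dotProduct_mulVec_zero_iff _).mp h
  have hQXP : Q * X * Pᵀ = 0 := by rwa [kronecker_mulVec_vec, vec_eq_zero_iff] at hker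
  calc P * (Xᴴ * Q * X)ᵀ = (Q * X * Pᵀ)ᵀ * Xᴴᵀ := by
        simp only [transpose_mul, transpose_transpose, Matrix.mul_assoc]
    _ = 0 := by rw [hQXP, transpose_zero, Matrix.zero_mul]

end Matrix

theorem mul_transformed_povm_eq_zero_general
    (d : ℕ)
    (ψ : Fin d × Fin d → ℂ)
    (S : Matrix (Fin d) (Fin d) ℂ)
    (hS : S = Matrix.of (fun l k => (Real.sqrt d : ℂ) * ψ (k, l)))
    (P Q : Matrix (Fin d) (Fin d) ℂ)
    (hP : P.PosSemidef) (hQ : Q.PosSemidef)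
    (h : star ψ ⬝ᵥ ((P ⊗ₖ Q) *ᵥ ψ) = 0) :
    P * (Sᴴ * Q * S)ᵀ = 0 := by
  set X : Matrix (Fin d) (Fin d) ℂ := Matrix.of fun l k => ψ (k, l)
  have hSX : S = (Real.sqrt d : ℂ) • X := by rw [hS]; rfl
  -- `ψ` is `vec X` by definition, so `h` applies as it stands.
  have hX : P * (Xᴴ * Q * X)ᵀ = 0 := mul_transpose_conjTranspose_mul_mul_eq_zero hP hQ h
  simp only [hSX, conjTranspose_smul, Matrix.smul_mul, Matrix.mul_smul, transpose_smul, hX,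
    smul_zero]

/-- If `P, Q` are positive semidefinite and `⟨ψ, (P ⊗ Q) ψ⟩ = 0`, then
`P · (Sᴴ Q S)ᵀ = 0`, where `S l k = √d · ψ (k, l)`. -/
theorem mul_transformed_povm_eq_zero
    (d : ℕ) (hd : 1 ≤ d)
    (ψ : Fin d × Fin d → ℂ)
    (S : Matrix (Fin d) (Fin d) ℂ)
    (hS : S = Matrix.of (fun l k => (Real.sqrt d : ℂ) * ψ (k, l)))
    (P Q : Matrix (Fin d) (Fin d) ℂ)
    (hP : P.PosSemidef) (hQ : Q.PosSemidef)
    (h : star ψ ⬝ᵥ ((P ⊗ₖ Q) *ᵥ ψ) = 0) :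
    P * (Sᴴ * Q * S)ᵀ = 0 :=
  mul_transformed_povm_eq_zero_general d ψ S hS P Q hP hQ h
end

section
/- Let G be a simple graph on a finite vertex set X and let S ⊆ X be a nonempty independent set of G. Define the matrix B indexed by X × X by B_{x,x'} = 1/|S| if x ∈ S and x' ∈ S, and B_{x,x'} = 0 otherwise. Then B is Hermitian positive semidefinite, B_{x,x'} = 0 whenever x and x' are adjacent in G, trace(B) = 1, and trace(B·J) = |S|, where J is the all-ones matrix. (In particular the independence number α(G) satisfies α(G) ≤ ϑ(G).) -/
open Matrix
open scoped BigOperators ComplexOrder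

/-! `B = |S|⁻¹ • 1_S 1_Sᵀ` for the indicator vector `1_S` of `S`: a nonnegative multiple of a
rank-one Gram matrix, hence positive semidefinite. Then `trace B = |S|⁻¹ (1_S ⬝ 1_S) = 1` and,
as `J = 1 1ᵀ`, `trace (B J) = |S|⁻¹ (∑ 1_S)² = |S|`. -/

namespace Finset

variable {X : Type*} [DecidableEq X] (R : Type*)

def indicatorVec [Zero R] [One R] (S : Finset X) : X → R := fun x => if x ∈ S then 1 else 0

variable {R} (S : Finset X)

theorem indicatorVec_of_mem [Zero R] [One R] {x : X} (hx : x ∈ S) : S.indicatorVec R x = 1 :=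
  if_pos hx

theorem star_indicatorVec [Semiring R] [StarRing R] :
    star (S.indicatorVec R) = S.indicatorVec R := by
  ext x
  by_cases hx : x ∈ S <;> simp [indicatorVec, hx]

theorem of_ite_mem_and_mem_eq_smul_vecMulVec [MulZeroOneClass R] (c : R) :
    Matrix.of (fun x x' => if x ∈ S ∧ x' ∈ S then c else 0) =
      c • vecMulVec (S.indicatorVec R) (S.indicatorVec R) := by
  ext x x'
  by_cases hx : x ∈ S <;> by_cases hx' : x' ∈ S <;> simp [indicatorVec, vecMulVec_apply, hx, hx']

variable [Fintype X]

theorem indicatorVec_dotProduct [NonAssocSemiring R] (w : X → R) :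
    S.indicatorVec R ⬝ᵥ w = ∑ x ∈ S, w x := by
  simp only [dotProduct, indicatorVec, ite_mul, one_mul, zero_mul, sum_ite_mem,
    univ_inter]

theorem sum_indicatorVec [NonAssocSemiring R] : ∑ x, S.indicatorVec R x = #S := by
  simp only [indicatorVec, sum_boole, filter_mem_eq_inter, univ_inter]

theorem indicatorVec_dotProduct_self [NonAssocSemiring R] :
    S.indicatorVec R ⬝ᵥ S.indicatorVec R = #S := by
  rw [indicatorVec_dotProduct, sum_congr rfl fun _ => S.indicatorVec_of_mem,
    sum_const, nsmul_one]

end Finset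

theorem Matrix.trace_vecMulVec_mul_of_one {X R : Type*} [Fintype X] [CommSemiring R]
    (u v : X → R) :
    (vecMulVec u v * Matrix.of (fun _ _ => (1 : R))).trace = (∑ x, u x) * ∑ x, v x := by
  have hJ : Matrix.of (fun _ _ => (1 : R)) = vecMulVec (1 : X → R) (1 : X → R) := by
    ext; simp [vecMulVec_apply]
  rw [hJ, vecMulVec_mul_vecMulVec, trace_vecMulVec, dotProduct_smul, smul_eq_mul,
    dotProduct_one, dotProduct_one, mul_comm]

/-- For a nonempty independent set `S` of a graph `G`, the matrix with entries
`1/|S|` on `S × S` and `0` elsewhere is a feasible solution for the Lovász theta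
function with `trace (B * J) = |S|`; in particular `α(G) ≤ ϑ(G)`. -/
theorem theta_ge_indep_set
    {X : Type} [Fintype X] [DecidableEq X] (G : SimpleGraph X)
    (S : Finset X) (hS : S.Nonempty)
    (hindep : ∀ x ∈ S, ∀ x' ∈ S, ¬ G.Adj x x')
    (B : Matrix X X ℂ)
    (hB : B = Matrix.of (fun x x' => if x ∈ S ∧ x' ∈ S then ((S.card : ℂ))⁻¹ else 0)) :
    B.PosSemidef ∧ (∀ x x', G.Adj x x' → B x x' = 0) ∧
      B.trace = 1 ∧ (B * Matrix.of (fun _ _ => (1 : ℂ))).trace = (S.card : ℂ) := by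
  set u := S.indicatorVec ℂ
  have hBu : B = (S.card : ℂ)⁻¹ • vecMulVec u u :=
    hB.trans (S.of_ite_mem_and_mem_eq_smul_vecMulVec _)
  have hcard : (S.card : ℂ) ≠ 0 := Nat.cast_ne_zero.mpr hS.card_ne_zero
  refine ⟨?_, fun x x' hadj => ?_, ?_, ?_⟩
  · have hu := (posSemidef_vecMulVec_self_star u).smul (a := (S.card : ℂ)⁻¹) (by positivity)
    rwa [S.star_indicatorVec, ← hBu] at hu
  · rw [hB, of_apply, if_neg fun hmem => hindep x hmem.1 x' hmem.2 hadj]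
  · rw [hBu, trace_smul, trace_vecMulVec, S.indicatorVec_dotProduct_self, smul_eq_mul,
      inv_mul_cancel₀ hcard]
  · rw [hBu, smul_mul, trace_smul, trace_vecMulVec_mul_of_one, S.sum_indicatorVec, smul_eq_mul]
    field_simp
end

section
/- Let C₅ be the cycle graph on vertex set Fin 5, where a and a' are adjacent iff a' − a ≡ ±1 (mod 5). Let C₅ ⊗ C₅ be the graph on (Fin 5) × (Fin 5) in which distinct pairs (a,b) and (a',b') are adjacent iff (a = a' or a is adjacent to a' in C₅) and (b = b' or b is adjacent to b' in C₅). Then the set {(0,0), (1,2), (2,4), (3,1), (4,3)} is an independent set of size 5 in C₅ ⊗ C₅; in particular the independence number of C₅ ⊗ C₅ is at least 5. -/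
open scoped BigOperators

/-- The cycle `C₅` on `Fin 5`. -/
def C5 : SimpleGraph (Fin 5) := SimpleGraph.fromRel (fun a b => b - a = 1)

/-- The tensor (strong) product `C₅ ⊗ C₅` on `Fin 5 × Fin 5`: distinct pairs are
adjacent iff each coordinate pair is equal or adjacent in `C₅`. -/
def C5tensorC5 : SimpleGraph (Fin 5 × Fin 5) :=
  SimpleGraph.fromRel
    (fun p q => (p.1 = q.1 ∨ C5.Adj p.1 q.1) ∧ (p.2 = q.2 ∨ C5.Adj p.2 q.2))

/-- The set `{(0,0), (1,2), (2,4), (3,1), (4,3)}` is an independent set of size `5` in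
`C₅ ⊗ C₅`; in particular `α(C₅ ⊗ C₅) ≥ 5`. -/
theorem indep_set_five_in_C5_tensor_C5 :
    ∀ (S : Finset (Fin 5 × Fin 5)),
      S = {(0, 0), (1, 2), (2, 4), (3, 1), (4, 3)} →
      (∀ p ∈ S, ∀ q ∈ S, ¬ C5tensorC5.Adj p q) ∧ S.card = 5 := by
  intro S hS
  subst hS
  refine ⟨?_, by decide⟩
  intro p hp q hq
  simp only [C5tensorC5, C5, SimpleGraph.fromRel_adj] at *
  revert hp hq
  revert p q
  decide
end

section
/- Let G be a simple graph on a finite vertex set X with an entanglement-assisted zero-error protocol with m ≥ 1 messages, with state ψ ∈ ℂ^(Fin d × Fin d), projective measurements {P_x^i}, and POVMs {Q_j^{xx'}} (and {Q_j^x} for isolated vertices x). Let S be the d×d matrix with S_{l,k} = √d · ψ_{(k,l)} and set M = (Sᴴ · S)ᵀ. Then: (b) trace(P_x^i · P_{x'}^j · M) = 0 for every edge {x,x'} of G and all 1 ≤ i,j ≤ m; and (c) trace(P_x^i · P_x^j · M) = 0 for every vertex x ∈ X and all i ≠ j. -/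
open Matrix Kronecker
open scoped BigOperators ComplexOrder

/-!
Write `ψ = vec Y`, i.e. `Y l k = ψ (k, l)`, so that `S = √d • Y`,
`⟨ψ, (A ⊗ B) ψ⟩ = tr (Yᴴ B Y Aᵀ)` and `tr (A B M) = d · tr ((Y Aᵀ)ᴴ (Y Bᵀ))` for Hermitian `A`.
For positive semidefinite `A` and `Q`, a vanishing `tr (Yᴴ Q Y Aᵀ)` forces `Q Y Aᵀ = 0`.
Hence if Alice's projection `A` is decoded as message `i` by Bob's POVM `Q`, then `Q i` fixes
`Y Aᵀ` and kills `Y Bᵀ` for every `B` decoded as a different message by the same POVM, so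
`(Y Aᵀ)ᴴ (Y Bᵀ) = (Y Aᵀ)ᴴ (Q i) (Y Bᵀ) = 0`. Every vertex carries such a POVM, and both ends of
an edge share one; for an edge and equal messages, `P_x^i P_{x'}^i = 0` already.
-/

namespace Matrix

variable {𝕜 m n ι : Type*}

theorem star_vec_dotProduct_kronecker_mulVec_vec [CommRing 𝕜] [StarRing 𝕜]
    [Fintype m] [Fintype n] (Y : Matrix n m 𝕜) (A : Matrix m m 𝕜) (B : Matrix n n 𝕜) :
    star (vec Y) ⬝ᵥ ((A ⊗ₖ B) *ᵥ vec Y) = (Yᴴ * B * Y * Aᵀ).trace := by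
  rw [kronecker_mulVec_vec, star_vec_dotProduct_vec, Matrix.mul_assoc, Matrix.mul_assoc,
    Matrix.mul_assoc]

variable [RCLike 𝕜] [Fintype n]

theorem IsHermitian.conjTranspose_mul_eq_zero {Q : Matrix n n 𝕜} (hQ : Q.IsHermitian)
    {U V : Matrix n m 𝕜} (hU : Q * U = U) (hV : Q * V = 0) : Uᴴ * V = 0 := by
  rw [← hU, conjTranspose_mul, hQ.eq, Matrix.mul_assoc, hV, Matrix.mul_zero]

variable [Fintype m]

open MatrixOrder in
theorem PosSemidef.mul_mul_eq_zero_of_trace_eq_zero {A : Matrix n n 𝕜} {B : Matrix m m 𝕜}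
    (hA : A.PosSemidef) (hB : B.PosSemidef) {Y : Matrix n m 𝕜}
    (h : (Yᴴ * A * Y * B).trace = 0) : A * Y * B = 0 := by
  classical
  obtain ⟨R, rfl⟩ := CStarAlgebra.nonneg_iff_eq_star_mul_self.mp hA.nonneg
  obtain ⟨T, rfl⟩ := CStarAlgebra.nonneg_iff_eq_mul_star_self.mp hB.nonneg
  simp only [star_eq_conjTranspose] at h ⊢
  have hRYT : R * Y * T = 0 := by
    rw [← trace_conjTranspose_mul_self_eq_zero_iff, ← h, conjTranspose_mul, conjTranspose_mul,
      Matrix.mul_assoc, trace_mul_comm]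
    simp only [Matrix.mul_assoc]
  calc Rᴴ * R * Y * (T * Tᴴ) = Rᴴ * (R * Y * T) * Tᴴ := by simp only [Matrix.mul_assoc]
    _ = 0 := by rw [hRYT, Matrix.mul_zero, Matrix.zero_mul]

theorem mul_mul_transpose_eq_ite_of_zero_error [DecidableEq ι] [DecidableEq n] [Fintype ι]
    {A : Matrix m m 𝕜} (hA : A.PosSemidef) {Q : ι → Matrix n n 𝕜} (hQ : ∀ j, (Q j).PosSemidef)
    (hQsum : ∑ j, Q j = 1) {Y : Matrix n m 𝕜} {i : ι}
    (hzero : ∀ j, j ≠ i → star (vec Y) ⬝ᵥ ((A ⊗ₖ Q j) *ᵥ vec Y) = 0) (j : ι) :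
    Q j * Y * Aᵀ = if j = i then Y * Aᵀ else 0 := by
  have hoff : ∀ j, j ≠ i → Q j * Y * Aᵀ = 0 := fun j hj =>
    (hQ j).mul_mul_eq_zero_of_trace_eq_zero hA.transpose <| by
      rw [← star_vec_dotProduct_kronecker_mulVec_vec, hzero j hj]
  split_ifs with hj
  · subst hj
    calc Q j * Y * Aᵀ = ∑ k, Q k * Y * Aᵀ := (Finset.sum_eq_single_of_mem j (Finset.mem_univ j)
          fun k _ hk => hoff k hk).symm
      _ = Y * Aᵀ := by rw [← Matrix.sum_mul, ← Matrix.sum_mul, hQsum, Matrix.one_mul]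
  · exact hoff j hj

theorem conjTranspose_mul_eq_zero_of_zero_error [DecidableEq ι] [DecidableEq n] [Fintype ι]
    {A B : Matrix m m 𝕜} (hA : A.PosSemidef) (hB : B.PosSemidef)
    {Q : ι → Matrix n n 𝕜} (hQ : ∀ j, (Q j).PosSemidef) (hQsum : ∑ j, Q j = 1)
    {Y : Matrix n m 𝕜} {i i' : ι} (hii' : i ≠ i')
    (hzeroA : ∀ j, j ≠ i → star (vec Y) ⬝ᵥ ((A ⊗ₖ Q j) *ᵥ vec Y) = 0)
    (hzeroB : ∀ j, j ≠ i' → star (vec Y) ⬝ᵥ ((B ⊗ₖ Q j) *ᵥ vec Y) = 0) :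
    (Y * Aᵀ)ᴴ * (Y * Bᵀ) = 0 := by
  refine (hQ i).isHermitian.conjTranspose_mul_eq_zero ?_ ?_
  · rw [← Matrix.mul_assoc, mul_mul_transpose_eq_ite_of_zero_error hA hQ hQsum hzeroA, if_pos rfl]
  · rw [← Matrix.mul_assoc, mul_mul_transpose_eq_ite_of_zero_error hB hQ hQsum hzeroB, if_neg hii']

theorem IsHermitian.trace_mul_mul_transpose_conjTranspose_mul_self {A : Matrix m m 𝕜}
    (hA : A.IsHermitian) (B : Matrix m m 𝕜) (Y : Matrix n m 𝕜) :
    (A * B * (Yᴴ * Y)ᵀ).trace = ((Y * Aᵀ)ᴴ * (Y * Bᵀ)).trace := by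
  rw [← trace_transpose, transpose_mul, transpose_transpose, transpose_mul, conjTranspose_mul,
    hA.transpose.eq, ← Matrix.mul_assoc _ Bᵀ, trace_mul_comm]
  simp only [Matrix.mul_assoc]

end Matrix

theorem orthogonality_relations_of_protocol_general
    {X : Type} (G : SimpleGraph X)
    (m d : ℕ)
    -- the shared bipartite state
    (ψ : Fin d × Fin d → ℂ)
    -- Alice's projective measurements, one for each message `i`
    (P : Fin m → X → Matrix (Fin d) (Fin d) ℂ)
    (hPherm : ∀ i x, (P i x).IsHermitian)
    (hPidem : ∀ i x, P i x * P i x = P i x)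
    (hPorth : ∀ i x x', x ≠ x' → P i x * P i x' = 0)
    -- Bob's POVMs, one for each edge `{x, x'}` of `G`
    (Q : X → X → Fin m → Matrix (Fin d) (Fin d) ℂ)
    (hQsymm : ∀ x x', G.Adj x x' → ∀ j, Q x x' j = Q x' x j)
    (hQpsd : ∀ x x', G.Adj x x' → ∀ j, (Q x x' j).PosSemidef)
    (hQsum : ∀ x x', G.Adj x x' → ∑ j, Q x x' j = 1)
    -- Bob's POVMs for isolated vertices
    (Q0 : X → Fin m → Matrix (Fin d) (Fin d) ℂ)
    (hQ0psd : ∀ x, (∀ y, ¬ G.Adj x y) → ∀ j, (Q0 x j).PosSemidef)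
    (hQ0sum : ∀ x, (∀ y, ¬ G.Adj x y) → ∑ j, Q0 x j = 1)
    -- zero-error (correct decoding) conditions
    (hzero : ∀ x x', G.Adj x x' → ∀ i j,
      star ψ ⬝ᵥ ((P i x ⊗ₖ Q x x' j) *ᵥ ψ) = if i = j then 1 else 0)
    (hzero0 : ∀ x, (∀ y, ¬ G.Adj x y) → ∀ i j,
      star ψ ⬝ᵥ ((P i x ⊗ₖ Q0 x j) *ᵥ ψ) = if i = j then 1 else 0) :
    ∀ (S : Matrix (Fin d) (Fin d) ℂ), S = Matrix.of (fun l k => (Real.sqrt d : ℂ) * ψ (k, l)) →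
    ∀ (M : Matrix (Fin d) (Fin d) ℂ), M = (Sᴴ * S)ᵀ →
      -- (b)
      ((∀ x x', G.Adj x x' → ∀ i j, (P i x * P j x' * M).trace = 0) ∧
      -- (c)
      (∀ x, ∀ i j, i ≠ j → (P i x * P j x * M).trace = 0)) := by
  intro S hS M hM
  obtain ⟨Y, rfl⟩ := vec_bijective.surjective ψ
  have hM' : M = (d : ℂ) • (Yᴴ * Y)ᵀ := by
    have hS' : S = (Real.sqrt d : ℂ) • Y := by rw [hS]; rfl
    rw [hM, hS', conjTranspose_smul, smul_mul_smul_comm, transpose_smul, RCLike.star_def,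
      Complex.conj_ofReal, ← Complex.ofReal_mul, Real.mul_self_sqrt d.cast_nonneg,
      Complex.ofReal_natCast]
  have hPpsd : ∀ i x, (P i x).PosSemidef := fun i x => by
    open MatrixOrder in
    exact (IsStarProjection.nonneg ⟨hPidem i x, hPherm i x⟩).posSemidef
  have off_diagonal : ∀ {A R} {i j : Fin m}, star (vec Y) ⬝ᵥ ((A ⊗ₖ R) *ᵥ vec Y) =
      (if i = j then 1 else 0) → j ≠ i → star (vec Y) ⬝ᵥ ((A ⊗ₖ R) *ᵥ vec Y) = 0 :=
    fun h hji => h.trans (if_neg hji.symm)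
  have trace_eq_zero : ∀ i j x x', (Y * (P i x)ᵀ)ᴴ * (Y * (P j x')ᵀ) = 0 →
      (P i x * P j x' * M).trace = 0 := fun i j x x' h => by
    rw [hM', mul_smul_comm, trace_smul,
      (hPherm i x).trace_mul_mul_transpose_conjTranspose_mul_self, h, trace_zero, smul_zero]
  refine ⟨fun x x' hxx' i j => ?_, fun x i j hij => trace_eq_zero i j x x ?_⟩
  · by_cases hij : i = j
    · rw [hij, hPorth j x x' hxx'.ne, Matrix.zero_mul, trace_zero]
    refine trace_eq_zero i j x x' <| conjTranspose_mul_eq_zero_of_zero_error (hPpsd i x)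
      (hPpsd j x') (hQpsd x x' hxx') (hQsum x x' hxx') hij
      (fun k => off_diagonal (hzero x x' hxx' i k)) (fun k => off_diagonal ?_)
    rw [hQsymm x x' hxx' k]
    exact hzero x' x hxx'.symm j k
  · obtain ⟨R, hRpsd, hRsum, hRzero⟩ : ∃ R : Fin m → Matrix (Fin d) (Fin d) ℂ,
        (∀ k, (R k).PosSemidef) ∧ ∑ k, R k = 1 ∧
        ∀ i k, star (vec Y) ⬝ᵥ ((P i x ⊗ₖ R k) *ᵥ vec Y) = if i = k then 1 else 0 := by
      by_cases hx : ∀ y, ¬ G.Adj x y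
      · exact ⟨Q0 x, hQ0psd x hx, hQ0sum x hx, hzero0 x hx⟩
      obtain ⟨y, hxy⟩ := not_forall_not.mp hx
      exact ⟨Q x y, hQpsd x y hxy, hQsum x y hxy, hzero x y hxy⟩
    exact conjTranspose_mul_eq_zero_of_zero_error (hPpsd i x) (hPpsd j x) hRpsd hRsum hij
      (fun k => off_diagonal (hRzero i k)) (fun k => off_diagonal (hRzero j k))

/-- For an entanglement-assisted zero-error protocol on `G`, with `S` defined from the
state `ψ` by `S l k = √d · ψ (k, l)` and `M = (Sᴴ S)ᵀ`, orthogonality relations (b) and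
(c) hold: `tr(P_x^i P_{x'}^j M) = 0` on edges, and `tr(P_x^i P_x^j M) = 0` for `i ≠ j`. -/
theorem orthogonality_relations_of_protocol
    {X : Type} [Fintype X] [DecidableEq X] (G : SimpleGraph X)
    (m d : ℕ) (hm : 1 ≤ m) (hd : 1 ≤ d)
    -- the shared bipartite state
    (ψ : Fin d × Fin d → ℂ) (hψ : star ψ ⬝ᵥ ψ = 1)
    -- Alice's projective measurements, one for each message `i`
    (P : Fin m → X → Matrix (Fin d) (Fin d) ℂ)
    (hPherm : ∀ i x, (P i x).IsHermitian)
    (hPidem : ∀ i x, P i x * P i x = P i x)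
    (hPorth : ∀ i x x', x ≠ x' → P i x * P i x' = 0)
    (hPsum : ∀ i, ∑ x, P i x = 1)
    -- Bob's POVMs, one for each edge `{x, x'}` of `G`
    (Q : X → X → Fin m → Matrix (Fin d) (Fin d) ℂ)
    (hQsymm : ∀ x x', G.Adj x x' → ∀ j, Q x x' j = Q x' x j)
    (hQpsd : ∀ x x', G.Adj x x' → ∀ j, (Q x x' j).PosSemidef)
    (hQsum : ∀ x x', G.Adj x x' → ∑ j, Q x x' j = 1)
    -- Bob's POVMs for isolated vertices
    (Q0 : X → Fin m → Matrix (Fin d) (Fin d) ℂ)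
    (hQ0psd : ∀ x, (∀ y, ¬ G.Adj x y) → ∀ j, (Q0 x j).PosSemidef)
    (hQ0sum : ∀ x, (∀ y, ¬ G.Adj x y) → ∑ j, Q0 x j = 1)
    -- zero-error (correct decoding) conditions
    (hzero : ∀ x x', G.Adj x x' → ∀ i j,
      star ψ ⬝ᵥ ((P i x ⊗ₖ Q x x' j) *ᵥ ψ) = if i = j then 1 else 0)
    (hzero0 : ∀ x, (∀ y, ¬ G.Adj x y) → ∀ i j,
      star ψ ⬝ᵥ ((P i x ⊗ₖ Q0 x j) *ᵥ ψ) = if i = j then 1 else 0) :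
    ∀ (S : Matrix (Fin d) (Fin d) ℂ), S = Matrix.of (fun l k => (Real.sqrt d : ℂ) * ψ (k, l)) →
    ∀ (M : Matrix (Fin d) (Fin d) ℂ), M = (Sᴴ * S)ᵀ →
      -- (b)
      ((∀ x x', G.Adj x x' → ∀ i j, (P i x * P j x' * M).trace = 0) ∧
      -- (c)
      (∀ x, ∀ i j, i ≠ j → (P i x * P j x * M).trace = 0)) :=
  orthogonality_relations_of_protocol_general G m d ψ P hPherm hPidem hPorth Q hQsymm hQpsd hQsum Q0
    hQ0psd hQ0sum hzero hzero0
end
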